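/- In the partial electrocution setting, the space obtained from the partially electrocuted space (X, d_pel) by electrocuting the sets L_α coincides, up to a quasi-isometry given by the identity map on X with constants depending only on δ, C, D, δ', K, ε, with the electric space (X, d_e) obtained from (X,d) by electrocuting the sets H_α. In particular (X, d_pel) is strongly hyperbolic relative to the collection {L_α}. -/

import Mathlib

open Set
open scoped Classical ENNReal

/-- `γ` is a geodesic segment from `x` to `y`, parametrized by arclength on `[0, dist x y]`. -/
def IsGeodesicSeg {X : Type} [MetricSpace X] (γ : ℝ → X) (x y : X) : Prop :=
  γ 0 = x ∧ γ (dist x y) = y ∧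
    ∀ s ∈ Set.Icc (0 : ℝ) (dist x y), ∀ t ∈ Set.Icc (0 : ℝ) (dist x y),
      dist (γ s) (γ t) = |s - t|

/-- The image (underlying set) of a geodesic segment from `x` to `y`. -/
def geodImage {X : Type} [MetricSpace X] (γ : ℝ → X) (x y : X) : Set X :=
  γ '' Set.Icc (0 : ℝ) (dist x y)

/-- A geodesic metric space: any two points are joined by a geodesic segment. -/
def GeodesicMS (X : Type) [MetricSpace X] : Prop :=
  ∀ x y : X, ∃ γ : ℝ → X, IsGeodesicSeg γ x y

/-- `X` is δ-hyperbolic: all geodesic triangles are δ-thin, i.e. each side lies in the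
δ-neighborhood of the union of the other two sides. -/
def DeltaHyperbolic (X : Type) [MetricSpace X] (δ : ℝ) : Prop :=
  ∀ (x y z : X) (γ₁ γ₂ γ₃ : ℝ → X),
    IsGeodesicSeg γ₁ x y → IsGeodesicSeg γ₂ y z → IsGeodesicSeg γ₃ x z →
    ∀ p ∈ geodImage γ₃ x z, ∃ q ∈ geodImage γ₁ x y ∪ geodImage γ₂ y z, dist p q ≤ δ

/-- A subset `Z` is C-quasiconvex: every geodesic segment joining two points of `Z` lies
in the C-neighborhood of `Z`. -/
def QuasiconvexSubset {X : Type} [MetricSpace X] (C : ℝ) (Z : Set X) : Prop :=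
  ∀ x ∈ Z, ∀ y ∈ Z, ∀ γ : ℝ → X, IsGeodesicSeg γ x y →
    ∀ p ∈ geodImage γ x y, ∃ z ∈ Z, dist p z ≤ C

/-- A collection of subsets is D-separated: distinct members are at distance at least `D`. -/
def SeparatedColl {X : Type} [MetricSpace X] (D : ℝ) (𝓗 : Set (Set X)) : Prop :=
  ∀ H₁ ∈ 𝓗, ∀ H₂ ∈ 𝓗, H₁ ≠ H₂ → ∀ a ∈ H₁, ∀ b ∈ H₂, D ≤ dist a b

/-- The cost of a single step of an electric chain: a step both of whose endpoints lie in a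
common electrocuted set costs at most `1`; any other step costs the distance between its
endpoints. -/
noncomputable def elecStep {X : Type} [MetricSpace X] (𝓗 : Set (Set X)) (a b : X) : ℝ :=
  if ∃ H ∈ 𝓗, a ∈ H ∧ b ∈ H then min 1 (dist a b) else dist a b

/-- The electric (coned-off) pseudometric obtained by electrocuting the members of `𝓗`:
the infimum of total costs of finite chains from `x` to `y`. -/
noncomputable def elecDist {X : Type} [MetricSpace X] (𝓗 : Set (Set X)) (x y : X) : ℝ :=
  sInf { r : ℝ | ∃ (n : ℕ) (c : ℕ → X), c 0 = x ∧ c n = y ∧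
    r = ∑ i ∈ Finset.range n, elecStep 𝓗 (c i) (c (i + 1)) }

/-- `β`, parametrized on `[0,T]`, is a P-quasigeodesic for the electric pseudometric. -/
def ElecQuasigeodesic {X : Type} [MetricSpace X] (𝓗 : Set (Set X)) (P : ℝ)
    (β : ℝ → X) (T : ℝ) : Prop :=
  ∀ s ∈ Set.Icc (0 : ℝ) T, ∀ t ∈ Set.Icc (0 : ℝ) T,
    (1 / P) * |s - t| - P ≤ elecDist 𝓗 (β s) (β t) ∧
      elecDist 𝓗 (β s) (β t) ≤ P * |s - t| + P

/-- `β` does not backtrack: it never returns to a member of `𝓗` after leaving it. -/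
def NoBacktracking {X : Type} [MetricSpace X] (𝓗 : Set (Set X)) (β : ℝ → X) (T : ℝ) : Prop :=
  ∀ H ∈ 𝓗, ∀ s t u : ℝ, 0 ≤ s → s ≤ t → t ≤ u → u ≤ T → β s ∈ H → β u ∈ H → β t ∈ H

/-- Cost of a single step of a chain in the partially electrocuted space
`X ⊔ (⨆ i, L i)` (the space obtained by gluing to each `H i` the metric mapping cylinder of
`g i : H i → L i`, each `x ∈ H i` being joined to `g i x` by a segment of length `1/2`):
a step between two points of `X` costs their distance; a step between `x ∈ H i` and a point
`ℓ ∈ L i` costs `1/2 + d_{L i}(g i x, ℓ)`; a step between two points of `L i` costs their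
distance in `L i`; no other steps are allowed. -/
noncomputable def pelStep {X : Type} [MetricSpace X] {ι : Type} (H : ι → Set X)
    (L : ι → Type) [∀ i, MetricSpace (L i)] (g : ∀ i, X → L i)
    (p q : X ⊕ (Σ i, L i)) : ℝ≥0∞ :=
  sInf { r : ℝ≥0∞ |
    (∃ a b : X, p = Sum.inl a ∧ q = Sum.inl b ∧ r = edist a b) ∨
    (∃ (i : ι) (a : X) (ℓ : L i), a ∈ H i ∧
      ((p = Sum.inl a ∧ q = Sum.inr ⟨i, ℓ⟩) ∨ (p = Sum.inr ⟨i, ℓ⟩ ∧ q = Sum.inl a)) ∧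
      r = 1 / 2 + edist (g i a) ℓ) ∨
    (∃ (i : ι) (ℓ ℓ' : L i), p = Sum.inr ⟨i, ℓ⟩ ∧ q = Sum.inr ⟨i, ℓ'⟩ ∧ r = edist ℓ ℓ') }

/-- The partially electrocuted pseudometric `d_pel` on `X ⊔ (⨆ i, L i)`: the infimum of total
costs of finite chains. -/
noncomputable def pelDist {X : Type} [MetricSpace X] {ι : Type} (H : ι → Set X)
    (L : ι → Type) [∀ i, MetricSpace (L i)] (g : ∀ i, X → L i)
    (p q : X ⊕ (Σ i, L i)) : ℝ≥0∞ :=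
  sInf { r : ℝ≥0∞ | ∃ (n : ℕ) (c : ℕ → X ⊕ (Σ i, L i)), c 0 = p ∧ c n = q ∧
    r = ∑ i ∈ Finset.range n, pelStep H L g (c i) (c (i + 1)) }

/-- The set of cone points `L i` inside the partially electrocuted space. -/
def LSet {X : Type} (ι : Type) (L : ι → Type) (i : ι) : Set (X ⊕ (Σ j, L j)) :=
  {p | ∃ ℓ : L i, p = Sum.inr ⟨i, ℓ⟩}

/-- Cost of a single step of a chain in the space obtained from the partially electrocuted
space by further electrocuting the sets `L i`. -/
noncomputable def pelElecStep {X : Type} [MetricSpace X] {ι : Type} (H : ι → Set X)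
    (L : ι → Type) [∀ i, MetricSpace (L i)] (g : ∀ i, X → L i)
    (p q : X ⊕ (Σ i, L i)) : ℝ≥0∞ :=
  if ∃ i : ι, p ∈ LSet ι L i ∧ q ∈ LSet ι L i then min 1 (pelDist H L g p q)
  else pelDist H L g p q

/-- The pseudometric obtained from `(X, d_pel)` by electrocuting the sets `L i`. -/
noncomputable def pelElecDist {X : Type} [MetricSpace X] {ι : Type} (H : ι → Set X)
    (L : ι → Type) [∀ i, MetricSpace (L i)] (g : ∀ i, X → L i)
    (p q : X ⊕ (Σ i, L i)) : ℝ≥0∞ :=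
  sInf { r : ℝ≥0∞ | ∃ (n : ℕ) (c : ℕ → X ⊕ (Σ i, L i)), c 0 = p ∧ c n = q ∧
    r = ∑ i ∈ Finset.range n, pelElecStep H L g (c i) (c (i + 1)) }


/-! ### Auxiliary machinery -/

section ChainAux

variable {A : Type}

/-- Concatenation of two chains. -/
lemma chain_concat {M : Type} [AddCommMonoid M] (step : A → A → M)
    {p q r : A} {n m : ℕ} {c c' : ℕ → A}
    (hc0 : c 0 = p) (hcn : c n = q) (hc'0 : c' 0 = q) (hc'm : c' m = r) :
    ∃ (N : ℕ) (e : ℕ → A), e 0 = p ∧ e N = r ∧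
      ∑ i ∈ Finset.range N, step (e i) (e (i + 1)) =
        ∑ i ∈ Finset.range n, step (c i) (c (i + 1)) +
          ∑ i ∈ Finset.range m, step (c' i) (c' (i + 1)) := by
  refine ⟨n + m, fun k => if k ≤ n then c k else c' (k - n), ?_, ?_, ?_⟩
  · simpa using hc0
  · beta_reduce
    rcases Nat.eq_zero_or_pos m with hm | hm
    · subst hm
      simp only [Nat.add_zero, if_pos le_rfl, hcn]
      rw [← hc'0, hc'm]
    · rw [if_neg (by omega)]
      have : n + m - n = m := by omega
      rw [this, hc'm]
  · have key : ∀ k, 0 < k →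
        (if n + k ≤ n then c (n + k) else c' (n + k - n)) = c' k := by
      intro k hk
      rw [if_neg (by omega)]
      congr 1
      omega
    have key0 : (if n + 0 ≤ n then c (n + 0) else c' (n + 0 - n)) = c' 0 := by
      simp [hcn, hc'0]
    rw [Finset.sum_range_add]
    congr 1
    · refine Finset.sum_congr rfl fun i hi => ?_
      have hi' : i < n := Finset.mem_range.mp hi
      beta_reduce
      rw [if_pos (by omega), if_pos (by omega)]
    · refine Finset.sum_congr rfl fun i hi => ?_
      beta_reduce
      have h1 : (if n + i ≤ n then c (n + i) else c' (n + i - n)) = c' i := by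
        rcases Nat.eq_zero_or_pos i with h | h
        · subst h; exact key0
        · exact key i h
      have h2 : n + i + 1 = n + (i + 1) := by omega
      rw [h1, h2, key (i + 1) (by omega)]

/-- Generic chain infimum in `ℝ≥0∞`. -/
noncomputable def chainInf (step : A → A → ℝ≥0∞) (p q : A) : ℝ≥0∞ :=
  sInf { r : ℝ≥0∞ | ∃ (n : ℕ) (c : ℕ → A), c 0 = p ∧ c n = q ∧
    r = ∑ i ∈ Finset.range n, step (c i) (c (i + 1)) }

lemma chainInf_le_step (step : A → A → ℝ≥0∞) (p q : A) :
    chainInf step p q ≤ step p q :=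
  sInf_le ⟨1, fun k => if k = 0 then p else q, by simp, by simp, by simp⟩

lemma chainInf_self (step : A → A → ℝ≥0∞) (p : A) : chainInf step p p = 0 :=
  le_antisymm (sInf_le ⟨0, fun _ => p, rfl, rfl, by simp⟩) zero_le

lemma chainInf_triangle (step : A → A → ℝ≥0∞) (p q r : A) :
    chainInf step p r ≤ chainInf step p q + chainInf step q r := by
  unfold chainInf
  rw [ENNReal.sInf_add]
  refine le_iInf₂ fun a ha => ?_
  rw [add_comm, ENNReal.sInf_add]
  refine le_iInf₂ fun b hb => ?_
  obtain ⟨n, c, hc0, hcn, hra⟩ := ha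
  obtain ⟨m, c', hc'0, hc'm, hrb⟩ := hb
  obtain ⟨N, e, he0, heN, hsum⟩ := chain_concat step hc0 hcn hc'0 hc'm
  refine sInf_le ⟨N, e, he0, heN, ?_⟩
  rw [hra, hrb, hsum]
  exact add_comm _ _

lemma chainF_le_sum (f : A → A → ℝ≥0∞) (hself : ∀ p, f p p = 0)
    (htri : ∀ p q r, f p r ≤ f p q + f q r) (c : ℕ → A) (n : ℕ) :
    f (c 0) (c n) ≤ ∑ i ∈ Finset.range n, f (c i) (c (i + 1)) := by
  induction n with
  | zero => simp [hself]
  | succ n ih =>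
    rw [Finset.sum_range_succ]
    exact le_trans (htri _ (c n) _) (add_le_add ih le_rfl)

lemma le_two_mul_chainInf (step f : A → A → ℝ≥0∞)
    (hself : ∀ p, f p p = 0) (htri : ∀ p q r, f p r ≤ f p q + f q r)
    (hstep : ∀ p q, f p q ≤ 2 * step p q) (p q : A) :
    f p q ≤ 2 * chainInf step p q := by
  have h2 : (2 : ℝ≥0∞) ≠ 0 := two_ne_zero
  have h2' : (2 : ℝ≥0∞) ≠ ⊤ := ENNReal.ofNat_ne_top
  rw [mul_comm, ← ENNReal.div_le_iff_le_mul (Or.inl h2) (Or.inl h2')]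
  refine le_sInf ?_
  rintro r ⟨n, c, hc0, hcn, rfl⟩
  rw [ENNReal.div_le_iff_le_mul (Or.inl h2) (Or.inl h2'), mul_comm]
  calc f p q = f (c 0) (c n) := by rw [hc0, hcn]
    _ ≤ ∑ i ∈ Finset.range n, f (c i) (c (i + 1)) := chainF_le_sum f hself htri c n
    _ ≤ ∑ i ∈ Finset.range n, 2 * step (c i) (c (i + 1)) :=
        Finset.sum_le_sum fun i _ => hstep _ _
    _ = 2 * ∑ i ∈ Finset.range n, step (c i) (c (i + 1)) := (Finset.mul_sum _ _ _).symm

end ChainAux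

section ElecAux

variable {X : Type} [MetricSpace X] (𝓗 : Set (Set X))

lemma elecStep_nonneg (a b : X) : 0 ≤ elecStep 𝓗 a b := by
  unfold elecStep
  split
  · exact le_min zero_le_one dist_nonneg
  · exact dist_nonneg

lemma elecStep_le_dist (a b : X) : elecStep 𝓗 a b ≤ dist a b := by
  unfold elecStep
  split
  · exact min_le_right _ _
  · exact le_rfl

lemma elecStep_le_one {a b : X} {H' : Set X} (hH : H' ∈ 𝓗) (ha : a ∈ H') (hb : b ∈ H') :
    elecStep 𝓗 a b ≤ 1 := by
  unfold elecStep
  rw [if_pos ⟨H', hH, ha, hb⟩]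
  exact min_le_left _ _

/-- The set of total costs of electric chains. -/
def elecSet (x y : X) : Set ℝ :=
  { r : ℝ | ∃ (n : ℕ) (c : ℕ → X), c 0 = x ∧ c n = y ∧
    r = ∑ i ∈ Finset.range n, elecStep 𝓗 (c i) (c (i + 1)) }

lemma elecDist_def (x y : X) : elecDist 𝓗 x y = sInf (elecSet 𝓗 x y) := rfl

lemma elecSet_nonempty (x y : X) : (elecSet 𝓗 x y).Nonempty :=
  ⟨elecStep 𝓗 x y, 1, fun k => if k = 0 then x else y, by simp, by simp, by simp⟩

lemma elecSet_bddBelow (x y : X) : BddBelow (elecSet 𝓗 x y) := by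
  refine ⟨0, ?_⟩
  rintro r ⟨n, c, -, -, rfl⟩
  exact Finset.sum_nonneg fun i _ => elecStep_nonneg 𝓗 _ _

lemma elecDist_nonneg (x y : X) : 0 ≤ elecDist 𝓗 x y :=
  Real.sInf_nonneg fun r hr => by
    obtain ⟨n, c, -, -, rfl⟩ := hr
    exact Finset.sum_nonneg fun i _ => elecStep_nonneg 𝓗 _ _

lemma elecDist_le_step (x y : X) : elecDist 𝓗 x y ≤ elecStep 𝓗 x y := by
  rw [elecDist_def]
  exact csInf_le (elecSet_bddBelow 𝓗 x y)
    ⟨1, fun k => if k = 0 then x else y, by simp, by simp, by simp⟩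

lemma elecDist_self (x : X) : elecDist 𝓗 x x = 0 := by
  refine le_antisymm ?_ (elecDist_nonneg 𝓗 x x)
  rw [elecDist_def]
  exact csInf_le (elecSet_bddBelow 𝓗 x x) ⟨0, fun _ => x, rfl, rfl, by simp⟩

lemma elecDist_triangle (x y z : X) :
    elecDist 𝓗 x z ≤ elecDist 𝓗 x y + elecDist 𝓗 y z := by
  rw [elecDist_def, elecDist_def, elecDist_def, ← sub_le_iff_le_add]
  refine le_csInf (elecSet_nonempty 𝓗 x y) fun a ha => ?_
  rw [sub_le_comm]
  refine le_csInf (elecSet_nonempty 𝓗 y z) fun b hb => ?_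
  rw [sub_le_iff_le_add, add_comm]
  obtain ⟨n, c, hc0, hcn, hra⟩ := ha
  obtain ⟨m, c', hc'0, hc'm, hrb⟩ := hb
  obtain ⟨N, e, he0, heN, hsum⟩ := chain_concat (elecStep 𝓗) hc0 hcn hc'0 hc'm
  exact csInf_le (elecSet_bddBelow 𝓗 x z) ⟨N, e, he0, heN, by rw [hra, hrb, ← hsum]⟩

end ElecAux

section PelAux

variable {X : Type} [MetricSpace X] {ι : Type} (H : ι → Set X)
  (L : ι → Type) [∀ i, MetricSpace (L i)] (g : ∀ i, X → L i)

lemma pelDist_eq_chainInf : pelDist H L g = chainInf (pelStep H L g) := rfl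

lemma pelElecDist_eq_chainInf : pelElecDist H L g = chainInf (pelElecStep H L g) := rfl

lemma pelElecStep_le_pelDist (p q : X ⊕ (Σ i, L i)) :
    pelElecStep H L g p q ≤ pelDist H L g p q := by
  unfold pelElecStep
  split
  · exact min_le_right _ _
  · exact le_rfl

lemma pelElecDist_le_pelStep (p q : X ⊕ (Σ i, L i)) :
    pelElecDist H L g p q ≤ pelStep H L g p q := by
  rw [pelElecDist_eq_chainInf]
  refine le_trans (chainInf_le_step _ _ _) ?_
  refine le_trans (pelElecStep_le_pelDist H L g p q) ?_
  rw [pelDist_eq_chainInf]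
  exact chainInf_le_step _ _ _

lemma pelElecDist_self (p : X ⊕ (Σ i, L i)) : pelElecDist H L g p p = 0 := by
  rw [pelElecDist_eq_chainInf]; exact chainInf_self _ _

lemma pelElecDist_triangle (p q r : X ⊕ (Σ i, L i)) :
    pelElecDist H L g p r ≤ pelElecDist H L g p q + pelElecDist H L g q r := by
  rw [pelElecDist_eq_chainInf]; exact chainInf_triangle _ _ _ _

/-- Lower bound: the electric distance is at most twice the electrocuted pel distance. -/
lemma elec_le_two_mul_pelElec (h₀ : ι → X) (hh₀ : ∀ i, h₀ i ∈ H i) (x y : X) :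
    ENNReal.ofReal (elecDist (Set.range H) x y) ≤
      2 * pelElecDist H L g (Sum.inl x) (Sum.inl y) := by
  set π : X ⊕ (Σ i, L i) → X := Sum.elim id (fun s => h₀ s.1) with hπ
  set F : (X ⊕ (Σ i, L i)) → (X ⊕ (Σ i, L i)) → ℝ≥0∞ :=
    fun p q => ENNReal.ofReal (elecDist (Set.range H) (π p) (π q)) with hF
  have hself : ∀ p, F p p = 0 := by
    intro p
    rw [hF]
    simp [elecDist_self]
  have htri : ∀ p q r, F p r ≤ F p q + F q r := by
    intro p q r
    rw [hF]
    exact le_trans (ENNReal.ofReal_le_ofReal (elecDist_triangle _ _ (π q) _))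
      ENNReal.ofReal_add_le
  have h2 : (2 : ℝ≥0∞) ≠ 0 := two_ne_zero
  have h2' : (2 : ℝ≥0∞) ≠ ⊤ := ENNReal.ofNat_ne_top
  have hstep_pel : ∀ p q, F p q ≤ 2 * pelStep H L g p q := by
    intro p q
    rw [mul_comm, ← ENNReal.div_le_iff_le_mul (Or.inl h2) (Or.inl h2')]
    refine le_sInf ?_
    rintro r (⟨a, b, rfl, rfl, rfl⟩ |
      ⟨i, a, ℓ, haH, (⟨rfl, rfl⟩ | ⟨rfl, rfl⟩), rfl⟩ | ⟨i, ℓ, ℓ', rfl, rfl, rfl⟩)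
    · refine le_trans ENNReal.half_le_self ?_
      show ENNReal.ofReal (elecDist (Set.range H) a b) ≤ edist a b
      rw [edist_dist]
      exact ENNReal.ofReal_le_ofReal
        (le_trans (elecDist_le_step _ _ _) (elecStep_le_dist _ _ _))
    · refine le_trans ?_ le_self_add
      refine ENNReal.div_le_div_right ?_ 2
      show ENNReal.ofReal (elecDist (Set.range H) a (h₀ i)) ≤ 1
      rw [← ENNReal.ofReal_one]
      exact ENNReal.ofReal_le_ofReal (le_trans (elecDist_le_step _ _ _)
        (elecStep_le_one _ ⟨i, rfl⟩ haH (hh₀ i)))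
    · refine le_trans ?_ le_self_add
      refine ENNReal.div_le_div_right ?_ 2
      show ENNReal.ofReal (elecDist (Set.range H) (h₀ i) a) ≤ 1
      rw [← ENNReal.ofReal_one]
      exact ENNReal.ofReal_le_ofReal (le_trans (elecDist_le_step _ _ _)
        (elecStep_le_one _ ⟨i, rfl⟩ (hh₀ i) haH))
    · show ENNReal.ofReal (elecDist (Set.range H) (h₀ i) (h₀ i)) / 2 ≤ edist ℓ ℓ'
      rw [elecDist_self]
      simp
  have hstepE : ∀ p q, F p q ≤ 2 * pelElecStep H L g p q := by
    intro p q
    unfold pelElecStep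
    split
    · rename_i h
      obtain ⟨i, hp, hq⟩ := h
      obtain ⟨ℓ, rfl⟩ := hp
      obtain ⟨ℓ', rfl⟩ := hq
      show ENNReal.ofReal (elecDist (Set.range H) (h₀ i) (h₀ i)) ≤ _
      rw [elecDist_self]
      simp
    · rw [pelDist_eq_chainInf]
      exact le_two_mul_chainInf _ F hself htri hstep_pel p q
  have := le_two_mul_chainInf _ F hself htri hstepE (Sum.inl x) (Sum.inl y)
  rw [← pelElecDist_eq_chainInf] at this
  exact this

/-- Per-step upper bound. -/
lemma pelElec_le_two_elecStep (a b : X) :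
    pelElecDist H L g (Sum.inl a) (Sum.inl b) ≤
      ENNReal.ofReal (2 * elecStep (Set.range H) a b) := by
  have hd : pelElecDist H L g (Sum.inl a) (Sum.inl b) ≤ edist a b :=
    le_trans (pelElecDist_le_pelStep H L g _ _)
      (sInf_le (Or.inl ⟨a, b, rfl, rfl, rfl⟩))
  unfold elecStep
  split
  · rename_i hH
    obtain ⟨H', ⟨i, rfl⟩, haH, hbH⟩ := hH
    have h2 : pelElecDist H L g (Sum.inl a) (Sum.inl b) ≤ 2 := by
      have hb0 : pelElecDist H L g (Sum.inl a) (Sum.inr ⟨i, g i a⟩) ≤ 1 / 2 := by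
        refine le_trans (pelElecDist_le_pelStep H L g _ _) ?_
        have := sInf_le (s := { r : ℝ≥0∞ |
          (∃ a' b' : X, (Sum.inl a : X ⊕ (Σ j, L j)) = Sum.inl a' ∧
            (Sum.inr ⟨i, g i a⟩ : X ⊕ (Σ j, L j)) = Sum.inl b' ∧ r = edist a' b') ∨
          (∃ (j : ι) (a' : X) (ℓ : L j), a' ∈ H j ∧
            (((Sum.inl a : X ⊕ (Σ j, L j)) = Sum.inl a' ∧
              (Sum.inr ⟨i, g i a⟩ : X ⊕ (Σ j, L j)) = Sum.inr ⟨j, ℓ⟩) ∨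
             ((Sum.inl a : X ⊕ (Σ j, L j)) = Sum.inr ⟨j, ℓ⟩ ∧
              (Sum.inr ⟨i, g i a⟩ : X ⊕ (Σ j, L j)) = Sum.inl a')) ∧
            r = 1 / 2 + edist (g j a') ℓ) ∨
          (∃ (j : ι) (ℓ ℓ' : L j), (Sum.inl a : X ⊕ (Σ j, L j)) = Sum.inr ⟨j, ℓ⟩ ∧
            (Sum.inr ⟨i, g i a⟩ : X ⊕ (Σ j, L j)) = Sum.inr ⟨j, ℓ'⟩ ∧ r = edist ℓ ℓ') })
          (a := 1 / 2 + edist (g i a) (g i a))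
          (Or.inr (Or.inl ⟨i, a, g i a, haH, Or.inl ⟨rfl, rfl⟩, rfl⟩))
        rw [edist_self, add_zero] at this
        exact this
      have hb1 : pelElecDist H L g (Sum.inr ⟨i, g i a⟩) (Sum.inr ⟨i, g i b⟩) ≤ 1 := by
        rw [pelElecDist_eq_chainInf]
        refine le_trans (chainInf_le_step _ _ _) ?_
        unfold pelElecStep
        rw [if_pos ⟨i, ⟨g i a, rfl⟩, ⟨g i b, rfl⟩⟩]
        exact min_le_left _ _
      have hb2 : pelElecDist H L g (Sum.inr ⟨i, g i b⟩) (Sum.inl b) ≤ 1 / 2 := by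
        refine le_trans (pelElecDist_le_pelStep H L g _ _) ?_
        have := sInf_le (s := { r : ℝ≥0∞ |
          (∃ a' b' : X, (Sum.inr ⟨i, g i b⟩ : X ⊕ (Σ j, L j)) = Sum.inl a' ∧
            (Sum.inl b : X ⊕ (Σ j, L j)) = Sum.inl b' ∧ r = edist a' b') ∨
          (∃ (j : ι) (a' : X) (ℓ : L j), a' ∈ H j ∧
            (((Sum.inr ⟨i, g i b⟩ : X ⊕ (Σ j, L j)) = Sum.inl a' ∧
              (Sum.inl b : X ⊕ (Σ j, L j)) = Sum.inr ⟨j, ℓ⟩) ∨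
             ((Sum.inr ⟨i, g i b⟩ : X ⊕ (Σ j, L j)) = Sum.inr ⟨j, ℓ⟩ ∧
              (Sum.inl b : X ⊕ (Σ j, L j)) = Sum.inl a')) ∧
            r = 1 / 2 + edist (g j a') ℓ) ∨
          (∃ (j : ι) (ℓ ℓ' : L j), (Sum.inr ⟨i, g i b⟩ : X ⊕ (Σ j, L j)) = Sum.inr ⟨j, ℓ⟩ ∧
            (Sum.inl b : X ⊕ (Σ j, L j)) = Sum.inr ⟨j, ℓ'⟩ ∧ r = edist ℓ ℓ') })
          (a := 1 / 2 + edist (g i b) (g i b))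
          (Or.inr (Or.inl ⟨i, b, g i b, hbH, Or.inr ⟨rfl, rfl⟩, rfl⟩))
        rw [edist_self, add_zero] at this
        exact this
      calc pelElecDist H L g (Sum.inl a) (Sum.inl b)
          ≤ pelElecDist H L g (Sum.inl a) (Sum.inr ⟨i, g i a⟩) +
              pelElecDist H L g (Sum.inr ⟨i, g i a⟩) (Sum.inr ⟨i, g i b⟩) +
              pelElecDist H L g (Sum.inr ⟨i, g i b⟩) (Sum.inl b) := by
            refine le_trans (pelElecDist_triangle H L g _ (Sum.inr ⟨i, g i b⟩) _) ?_
            exact add_le_add_left (pelElecDist_triangle H L g _ (Sum.inr ⟨i, g i a⟩) _) _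
        _ ≤ 1 / 2 + 1 + 1 / 2 := add_le_add (add_le_add hb0 hb1) hb2
        _ = 2 := by rw [add_right_comm, ENNReal.add_halves, one_add_one_eq_two]
    rcases le_total 1 (dist a b) with h1 | h1
    · rw [min_eq_left h1, mul_one]
      calc pelElecDist H L g (Sum.inl a) (Sum.inl b) ≤ 2 := h2
        _ = ENNReal.ofReal 2 := (ENNReal.ofReal_ofNat 2).symm
    · rw [min_eq_right h1]
      refine le_trans hd ?_
      rw [edist_dist]
      exact ENNReal.ofReal_le_ofReal (by linarith [dist_nonneg (x := a) (y := b)])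
  · refine le_trans hd ?_
    rw [edist_dist]
    exact ENNReal.ofReal_le_ofReal (by linarith [dist_nonneg (x := a) (y := b)])

/-- Upper bound: the electrocuted pel distance is bounded by the electric distance. -/
lemma pelElec_le_elec (x y : X) :
    pelElecDist H L g (Sum.inl x) (Sum.inl y) ≤
      ENNReal.ofReal (2 * elecDist (Set.range H) x y + 2) := by
  obtain ⟨r, hr, hrlt⟩ := Real.lt_sInf_add_pos (elecSet_nonempty (Set.range H) x y) one_pos
  have hrlt' : r < elecDist (Set.range H) x y + 1 := hrlt
  obtain ⟨n, c, hc0, hcn, rfl⟩ := hr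
  calc pelElecDist H L g (Sum.inl x) (Sum.inl y)
      = pelElecDist H L g (Sum.inl (c 0)) (Sum.inl (c n)) := by rw [hc0, hcn]
    _ ≤ ∑ i ∈ Finset.range n,
          pelElecDist H L g (Sum.inl (c i)) (Sum.inl (c (i + 1))) :=
        chainF_le_sum (fun p q => pelElecDist H L g p q)
          (pelElecDist_self H L g) (pelElecDist_triangle H L g)
          (fun k => Sum.inl (c k)) n
    _ ≤ ∑ i ∈ Finset.range n,
          ENNReal.ofReal (2 * elecStep (Set.range H) (c i) (c (i + 1))) :=
        Finset.sum_le_sum fun i _ => pelElec_le_two_elecStep H L g _ _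
    _ = ENNReal.ofReal (∑ i ∈ Finset.range n,
          2 * elecStep (Set.range H) (c i) (c (i + 1))) :=
        (ENNReal.ofReal_sum_of_nonneg fun i _ =>
          mul_nonneg (by norm_num) (elecStep_nonneg _ _ _)).symm
    _ ≤ ENNReal.ofReal (2 * elecDist (Set.range H) x y + 2) := by
        rw [← Finset.mul_sum]
        exact ENNReal.ofReal_le_ofReal (by linarith)

end PelAux

/-- In the partial electrocution setting, the space obtained from the
partially electrocuted space `(X, d_pel)` by electrocuting the sets `L i` coincides, up to a
quasi-isometry given by the identity map on `X` with constants depending only on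
δ, C, D, δ', K, ε, with the electric space `(X, d_e)` obtained from `(X,d)` by electrocuting
the sets `H i`. -/
theorem pel_electrocuted_is_electric (δ C D δ' K ε : ℝ) :
    ∃ K₀ ε₀ : ℝ, 1 ≤ K₀ ∧ 0 ≤ ε₀ ∧
      ∀ (X : Type) [MetricSpace X] (ι : Type) (H : ι → Set X) (L : ι → Type)
        [∀ i, MetricSpace (L i)] (g : ∀ i, X → L i),
        GeodesicMS X → DeltaHyperbolic X δ →
        (∀ i, (H i).Nonempty) →
        (∀ i, QuasiconvexSubset C (H i)) →
        (∀ i j, i ≠ j → ∀ a ∈ H i, ∀ b ∈ H j, D ≤ dist a b) →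
        (∀ i, GeodesicMS (L i)) → (∀ i, DeltaHyperbolic (L i) δ') →
        (∀ i, ∀ x ∈ H i, ∀ y ∈ H i, dist (g i x) (g i y) ≤ K * dist x y + ε) →
        (∀ x y : X,
          ENNReal.ofReal ((1 / K₀) * elecDist (Set.range H) x y - ε₀) ≤
              pelElecDist H L g (Sum.inl x) (Sum.inl y) ∧
            pelElecDist H L g (Sum.inl x) (Sum.inl y) ≤
              ENNReal.ofReal (K₀ * elecDist (Set.range H) x y + ε₀)) ∧
        (∀ p : X ⊕ (Σ i, L i), ∃ x : X,
          pelElecDist H L g p (Sum.inl x) ≤ ENNReal.ofReal ε₀) := by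
  refine ⟨2, 2, one_le_two, by norm_num, ?_⟩
  intro X _ ι H L _ g hgeo hhyp hne hqc hsep hLg hLh hlip
  have h₀ : ∀ i, (hne i).choose ∈ H i := fun i => (hne i).choose_spec
  constructor
  · intro x y
    constructor
    · have lower := elec_le_two_mul_pelElec H L g (fun i => (hne i).choose) h₀ x y
      have h1 : ENNReal.ofReal (elecDist (Set.range H) x y) ≤
          pelElecDist H L g (Sum.inl x) (Sum.inl y) * 2 := by
        rw [mul_comm]; exact lower
      have h2 := (ENNReal.div_le_iff_le_mul (Or.inl two_ne_zero)
        (Or.inl ENNReal.ofNat_ne_top)).mpr h1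
      have half : ENNReal.ofReal (1 / 2 * elecDist (Set.range H) x y) ≤
          pelElecDist H L g (Sum.inl x) (Sum.inl y) := by
        calc ENNReal.ofReal (1 / 2 * elecDist (Set.range H) x y)
            = ENNReal.ofReal (elecDist (Set.range H) x y / 2) := by
              rw [one_div, inv_mul_eq_div]
          _ = ENNReal.ofReal (elecDist (Set.range H) x y) / ENNReal.ofReal 2 :=
              ENNReal.ofReal_div_of_pos (by norm_num)
          _ = ENNReal.ofReal (elecDist (Set.range H) x y) / 2 := by
              rw [ENNReal.ofReal_ofNat]
          _ ≤ _ := h2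
      exact le_trans (ENNReal.ofReal_le_ofReal (by linarith)) half
    · exact pelElec_le_elec H L g x y
  · intro p
    rcases p with x | ⟨i, ℓ⟩
    · exact ⟨x, by rw [pelElecDist_self H L g]; exact zero_le⟩
    · refine ⟨(hne i).choose, ?_⟩
      set a : X := (hne i).choose with ha
      have hb0 : pelElecDist H L g (Sum.inr ⟨i, ℓ⟩) (Sum.inr ⟨i, g i a⟩) ≤ 1 := by
        rw [pelElecDist_eq_chainInf]
        refine le_trans (chainInf_le_step _ _ _) ?_
        unfold pelElecStep
        rw [if_pos ⟨i, ⟨ℓ, rfl⟩, ⟨g i a, rfl⟩⟩]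
        exact min_le_left _ _
      have hb1 : pelElecDist H L g (Sum.inr ⟨i, g i a⟩) (Sum.inl a) ≤ 1 / 2 := by
        refine le_trans (pelElecDist_le_pelStep H L g _ _) ?_
        have := sInf_le (s := { r : ℝ≥0∞ |
          (∃ a' b' : X, (Sum.inr ⟨i, g i a⟩ : X ⊕ (Σ j, L j)) = Sum.inl a' ∧
            (Sum.inl a : X ⊕ (Σ j, L j)) = Sum.inl b' ∧ r = edist a' b') ∨
          (∃ (j : ι) (a' : X) (ℓ' : L j), a' ∈ H j ∧
            (((Sum.inr ⟨i, g i a⟩ : X ⊕ (Σ j, L j)) = Sum.inl a' ∧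
              (Sum.inl a : X ⊕ (Σ j, L j)) = Sum.inr ⟨j, ℓ'⟩) ∨
             ((Sum.inr ⟨i, g i a⟩ : X ⊕ (Σ j, L j)) = Sum.inr ⟨j, ℓ'⟩ ∧
              (Sum.inl a : X ⊕ (Σ j, L j)) = Sum.inl a')) ∧
            r = 1 / 2 + edist (g j a') ℓ') ∨
          (∃ (j : ι) (ℓ' ℓ'' : L j), (Sum.inr ⟨i, g i a⟩ : X ⊕ (Σ j, L j)) = Sum.inr ⟨j, ℓ'⟩ ∧
            (Sum.inl a : X ⊕ (Σ j, L j)) = Sum.inr ⟨j, ℓ''⟩ ∧ r = edist ℓ' ℓ'') })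
          (a := 1 / 2 + edist (g i a) (g i a))
          (Or.inr (Or.inl ⟨i, a, g i a, h₀ i, Or.inr ⟨rfl, rfl⟩, rfl⟩))
        rw [edist_self, add_zero] at this
        exact this
      calc pelElecDist H L g (Sum.inr ⟨i, ℓ⟩) (Sum.inl a)
          ≤ pelElecDist H L g (Sum.inr ⟨i, ℓ⟩) (Sum.inr ⟨i, g i a⟩) +
              pelElecDist H L g (Sum.inr ⟨i, g i a⟩) (Sum.inl a) :=
            pelElecDist_triangle H L g _ _ _
        _ ≤ 1 + 1 / 2 := add_le_add hb0 hb1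
        _ ≤ ENNReal.ofReal 2 := by
            rw [ENNReal.ofReal_ofNat]
            calc (1 : ℝ≥0∞) + 1 / 2 ≤ 1 + 1 := add_le_add_right ENNReal.half_le_self 1
              _ = 2 := one_add_one_eq_two
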